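/- For every continuous f : ℝ² → ℝ that is 2π-periodic in each variable, the double Abel–Poisson means P_{rs}(f)(x,y) = (1/(4π²))∫_{−π}^{π}∫_{−π}^{π} f(x−u, y−v) ψ_r(u) ψ_s(v) du dv converge to f uniformly on ℝ² as (r,s) → (1⁻, 1⁻). -/

import Mathlib

open Real MeasureTheory

def Periodic2 (f : ℝ × ℝ → ℝ) : Prop :=
  ∀ (k : ℤ) (x y : ℝ), f (x + 2 * k * π, y) = f (x, y) ∧ f (x, y + 2 * k * π) = f (x, y)

noncomputable def poisson (r x : ℝ) : ℝ :=
  (1 - r ^ 2) / (1 - 2 * r * cos x + r ^ 2)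

noncomputable def Pop (r s : ℝ) (g : ℝ × ℝ → ℝ) (p : ℝ × ℝ) : ℝ :=
  (1 / (4 * π ^ 2)) *
    ∫ v in (-π)..π, ∫ u in (-π)..π, g (p.1 - u, p.2 - v) * poisson r u * poisson s v

lemma denom_pos {r : ℝ} (h0 : 0 ≤ r) (h1 : r < 1) (x : ℝ) :
    0 < 1 - 2 * r * cos x + r ^ 2 := by
  nlinarith [Real.cos_le_one x, Real.neg_one_le_cos x, sq_nonneg (1 - r)]

lemma poisson_nonneg {r : ℝ} (h0 : 0 ≤ r) (h1 : r < 1) (x : ℝ) :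
    0 ≤ poisson r x :=
  div_nonneg (by nlinarith) (denom_pos h0 h1 x).le

lemma poisson_cont {r : ℝ} (h0 : 0 ≤ r) (h1 : r < 1) : Continuous (poisson r) := by
  apply continuous_const.div (by continuity)
  intro x; exact (denom_pos h0 h1 x).ne'

lemma poisson_hasDeriv {r : ℝ} (h0 : 0 ≤ r) (h1 : r < 1) (x : ℝ) :
    HasDerivAt (fun x => x + 2 * arctan (r * sin x / (1 - r * cos x))) (poisson r x) x := by
  have hden : (0:ℝ) < 1 - r * cos x := by nlinarith [Real.cos_le_one x]
  have h1' : HasDerivAt (fun x => r * sin x) (r * cos x) x :=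
    (Real.hasDerivAt_sin x).const_mul r
  have h2' : HasDerivAt (fun x => 1 - r * cos x) (r * sin x) x := by
    simpa using ((Real.hasDerivAt_cos x).const_mul r).const_sub 1
  have hq := (h1'.div h2' hden.ne')
  have ha := hq.arctan
  have := ((ha.const_mul 2).const_add 0).add_const 0
  have h := (hasDerivAt_id x).add (ha.const_mul 2)
  refine h.congr_deriv ?_
  symm
  have hd := (denom_pos h0 h1 x).ne'
  have hsc := Real.sin_sq_add_cos_sq x
  have hs2 : sin x ^ 2 = 1 - cos x ^ 2 := by nlinarith [hsc]
  simp only [poisson, Pi.div_apply]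
  have hE : (1 - r*cos x)^2 + (r*sin x)^2 = 1 - 2*r*cos x + r^2 := by rw [mul_pow, hs2]; ring
  have hq : 1 / (1 + (r * sin x / (1 - r * cos x)) ^ 2) *
          ((r * cos x * (1 - r * cos x) - r * sin x * (r * sin x)) / (1 - r * cos x) ^ 2)
      = (r * cos x * (1 - r * cos x) - r * sin x * (r * sin x)) / (1 - 2 * r * cos x + r ^ 2) := by
    rw [← hE]; have := hden.ne'; field_simp
  rw [hq, mul_div_assoc', one_add_div hd]
  congr 1
  linear_combination (2*r^2) * hsc

lemma poisson_integral {r : ℝ} (h0 : 0 ≤ r) (h1 : r < 1) :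
    ∫ u in (-π)..π, poisson r u = 2 * π := by
  rw [intervalIntegral.integral_eq_sub_of_hasDerivAt
      (fun x _ => poisson_hasDeriv h0 h1 x)
      ((poisson_cont h0 h1).intervalIntegrable _ _)]
  simp [Real.sin_pi]
  ring

lemma poisson_integral2 {r : ℝ} (h0 : (1:ℝ)/2 ≤ r) (h1 : r < 1) :
    ∫ u in (-π)..π, (1 - cos u) * poisson r u = 2 * π * (1 - r) := by
  have h0' : (0:ℝ) ≤ r := by linarith
  have hr : r ≠ 0 := by positivity
  have pi1 := poisson_integral h0' h1
  have pc := poisson_cont h0' h1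
  have heq : ∀ u : ℝ, (1 - cos u) * poisson r u
      = (-(1-r)^2/(2*r)) * poisson r u + (1-r^2)/(2*r) := by
    intro u
    have hd := (denom_pos h0' h1 u).ne'
    simp only [poisson]
    have hd2 : 1 - cos u * r * 2 + r ^ 2 ≠ 0 := by rw [show cos u * r * 2 = 2 * r * cos u by ring]; exact hd
    field_simp
    ring
  simp only [heq]
  rw [intervalIntegral.integral_add ((continuous_const.fun_mul pc).intervalIntegrable _ _)
      intervalIntegrable_const, intervalIntegral.integral_const_mul, pi1,
      intervalIntegral.integral_const]
  rw [smul_eq_mul]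
  field_simp
  ring

lemma reduce {f : ℝ × ℝ → ℝ} (hp : Periodic2 f) (x y : ℝ) :
    ∃ x' y' : ℝ, x' ∈ Set.Icc (-π) π ∧ y' ∈ Set.Icc (-π) π ∧
      ∀ u v : ℝ, f (x - u, y - v) = f (x' - u, y' - v) := by
  obtain ⟨k, hk, -⟩ := existsUnique_add_zsmul_mem_Ico Real.two_pi_pos x (-π)
  obtain ⟨l, hl, -⟩ := existsUnique_add_zsmul_mem_Ico Real.two_pi_pos y (-π)
  refine ⟨x + 2 * k * π, y + 2 * l * π, ?_, ?_, ?_⟩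
  · have : x + k • (2 * π) ∈ Set.Ico (-π) (-π + 2 * π) := hk
    simp only [zsmul_eq_mul] at this
    constructor
    · have := this.1; nlinarith [this]
    · have := this.2; nlinarith [this]
  · have : y + l • (2 * π) ∈ Set.Ico (-π) (-π + 2 * π) := hl
    simp only [zsmul_eq_mul] at this
    constructor
    · have := this.1; nlinarith [this]
    · have := this.2; nlinarith [this]
  · intro u v
    have h1 := (hp k (x - u) (y - v)).1
    have h2 := (hp l (x - u + 2*k*π) (y - v)).2
    have e1 : x + 2 * (k:ℝ) * π - u = x - u + 2 * (k:ℝ) * π := by ring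
    have e2 : y + 2 * (l:ℝ) * π - v = y - v + 2 * (l:ℝ) * π := by ring
    rw [e1, e2, h2, h1]

lemma bounded {f : ℝ × ℝ → ℝ} (hc : Continuous f) (hp : Periodic2 f) :
    ∃ M : ℝ, 0 ≤ M ∧ ∀ p : ℝ × ℝ, |f p| ≤ M := by
  have hK : IsCompact (Set.Icc (-π) π ×ˢ Set.Icc (-π) π) :=
    isCompact_Icc.prod isCompact_Icc
  obtain ⟨C, hC⟩ := hK.exists_bound_of_continuousOn hc.continuousOn
  refine ⟨max C 0, le_max_right _ _, ?_⟩
  rintro ⟨x, y⟩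
  obtain ⟨x', y', hx', hy', he⟩ := reduce hp x y
  have := he 0 0
  simp only [sub_zero] at this
  rw [this]
  calc |f (x', y')| ≤ C := hC _ (Set.mk_mem_prod hx' hy')
    _ ≤ max C 0 := le_max_left _ _

lemma unifcont {f : ℝ × ℝ → ℝ} (hc : Continuous f) (hp : Periodic2 f)
    {ε : ℝ} (hε : 0 < ε) :
    ∃ η : ℝ, 0 < η ∧ η ≤ π ∧ ∀ (p : ℝ × ℝ) (u v : ℝ), |u| ≤ η → |v| ≤ η →
      |f (p.1 - u, p.2 - v) - f p| ≤ ε := by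
  set K : Set (ℝ × ℝ) := Set.Icc (-(π+1)) (π+1) ×ˢ Set.Icc (-(π+1)) (π+1) with hKdef
  have hK : IsCompact K := isCompact_Icc.prod isCompact_Icc
  have huc : UniformContinuousOn f K := hK.uniformContinuousOn_of_continuous hc.continuousOn
  rw [Metric.uniformContinuousOn_iff_le] at huc
  obtain ⟨δ, hδ, hd⟩ := huc ε hε
  refine ⟨min (min δ 1) π, by positivity, min_le_right _ _, ?_⟩
  rintro ⟨x, y⟩ u v hu hv
  obtain ⟨x', y', hx', hy', he⟩ := reduce hp x y
  have hfp : f (x, y) = f (x', y') := by have := he 0 0; simpa using this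
  have hu1 : |u| ≤ 1 := le_trans hu (le_trans (min_le_left _ _) (min_le_right _ _))
  have hv1 : |v| ≤ 1 := le_trans hv (le_trans (min_le_left _ _) (min_le_right _ _))
  have huδ : |u| ≤ δ := le_trans hu (le_trans (min_le_left _ _) (min_le_left _ _))
  have hvδ : |v| ≤ δ := le_trans hv (le_trans (min_le_left _ _) (min_le_left _ _))
  have hu' := abs_le.1 hu1
  have hv' := abs_le.1 hv1
  have haK : ((x' - u, y' - v) : ℝ × ℝ) ∈ K :=
    Set.mk_mem_prod
      (Set.mem_Icc.2 ⟨by linarith [hx'.1, hu'.2], by linarith [hx'.2, hu'.1]⟩)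
      (Set.mem_Icc.2 ⟨by linarith [hy'.1, hv'.2], by linarith [hy'.2, hv'.1]⟩)
  have hbK : ((x', y') : ℝ × ℝ) ∈ K :=
    Set.mk_mem_prod
      (Set.mem_Icc.2 ⟨by linarith [hx'.1], by linarith [hx'.2]⟩)
      (Set.mem_Icc.2 ⟨by linarith [hy'.1], by linarith [hy'.2]⟩)
  have hdist : dist ((x' - u, y' - v) : ℝ × ℝ) ((x', y') : ℝ × ℝ) ≤ δ := by
    rw [Prod.dist_eq]
    apply max_le
    · have e : x' - u - x' = -u := by ring
      rw [Real.dist_eq, e, abs_neg]; exact huδ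
    · have e : y' - v - y' = -v := by ring
      rw [Real.dist_eq, e, abs_neg]; exact hvδ
  have hfinal := hd _ haK _ hbK hdist
  rw [Real.dist_eq] at hfinal
  show |f (x - u, y - v) - f (x, y)| ≤ ε
  rw [he u v, hfp]
  exact hfinal

theorem stmt16 (f : ℝ × ℝ → ℝ) (hc : Continuous f) (hp : Periodic2 f) :
    ∀ ε : ℝ, 0 < ε → ∃ δ : ℝ, 0 < δ ∧ ∀ r s : ℝ,
      0 ≤ r → r < 1 → 0 ≤ s → s < 1 → 1 - δ < r → 1 - δ < s →
      ∀ p : ℝ × ℝ, |Pop r s f p - f p| < ε := by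
  intro ε hε
  obtain ⟨M, hM0, hM⟩ := bounded hc hp
  obtain ⟨η, hη0, hηπ, hηf⟩ := unifcont hc hp (show (0:ℝ) < ε/4 by linarith)
  have hπ := Real.pi_pos
  have hcosη : cos η < 1 := by
    have h := Real.cos_lt_cos_of_nonneg_of_le_pi (le_refl 0) hηπ hη0
    rwa [Real.cos_zero] at h
  set d : ℝ := 1 - cos η with hddef
  have hd : 0 < d := by rw [hddef]; linarith
  set C : ℝ := (2*M+1)/d with hCdef
  have hC : 0 < C := by positivity
  refine ⟨min (1/2) (ε*d/(8*(2*M+1))), lt_min (by norm_num) (by positivity), ?_⟩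
  intro r s hr0 hr1 hs0 hs1 hrδ hsδ p
  have hmin1 := min_le_left ((1:ℝ)/2) (ε*d/(8*(2*M+1)))
  have hmin2 := min_le_right ((1:ℝ)/2) (ε*d/(8*(2*M+1)))
  have hr2 : (1:ℝ)/2 ≤ r := by linarith
  have hs2 : (1:ℝ)/2 ≤ s := by linarith
  -- key pointwise estimate
  have key : ∀ (u v : ℝ), u ∈ Set.Icc (-π) π → v ∈ Set.Icc (-π) π →
      |f (p.1 - u, p.2 - v) - f p| ≤ ε/4 + C * ((1 - cos u) + (1 - cos v)) := by
    intro u v hu hv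
    have hcu : cos u ≤ 1 := Real.cos_le_one u
    have hcv : cos v ≤ 1 := Real.cos_le_one v
    rcases le_or_gt (max |u| |v|) η with h | h
    · have h1 := hηf p u v (le_trans (le_max_left _ _) h) (le_trans (le_max_right _ _) h)
      nlinarith [mul_nonneg hC.le (by linarith : (0:ℝ) ≤ (1 - cos u) + (1 - cos v))]
    · -- one of |u|, |v| exceeds η
      have htri : |f (p.1 - u, p.2 - v) - f p| ≤ 2 * M := by
        calc |f (p.1 - u, p.2 - v) - f p| ≤ |f (p.1 - u, p.2 - v)| + |f p| := abs_sub _ _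
          _ ≤ 2 * M := by have := hM (p.1 - u, p.2 - v); have := hM p; linarith
      have hbig : d ≤ (1 - cos u) + (1 - cos v) := by
        rcases max_cases |u| |v| with ⟨he, -⟩ | ⟨he, -⟩
        · have huη : η ≤ |u| := by rw [← he]; exact h.le
          have huπ : |u| ≤ π := abs_le.2 ⟨hu.1, hu.2⟩
          have := Real.cos_le_cos_of_nonneg_of_le_pi hη0.le huπ huη
          rw [Real.cos_abs] at this
          linarith [hddef]
        · have hvη : η ≤ |v| := by rw [← he]; exact h.le
          have hvπ : |v| ≤ π := abs_le.2 ⟨hv.1, hv.2⟩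
          have := Real.cos_le_cos_of_nonneg_of_le_pi hη0.le hvπ hvη
          rw [Real.cos_abs] at this
          linarith [hddef]
      have hCd : C * d = 2*M+1 := by rw [hCdef]; field_simp
      have : 2 * M ≤ C * ((1 - cos u) + (1 - cos v)) := by
        calc 2*M ≤ C * d := by rw [hCd]; linarith
          _ ≤ C * ((1 - cos u) + (1 - cos v)) := by
            exact mul_le_mul_of_nonneg_left hbig hC.le
      linarith
  -- continuity facts
  have hpr := poisson_cont hr0 hr1
  have hps := poisson_cont hs0 hs1
  have hprI : ∀ a b : ℝ, IntervalIntegrable (poisson r) volume a b :=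
    fun a b => hpr.intervalIntegrable a b
  -- the difference integrand
  set Δ : ℝ → ℝ → ℝ :=
    fun v u => (f (p.1 - u, p.2 - v) - f p) * poisson r u * poisson s v with hΔdef
  have hΔc : Continuous (Function.uncurry Δ) := by
    apply Continuous.mul
    apply Continuous.mul
    · exact (hc.comp ((continuous_const.sub continuous_snd).prodMk
        (continuous_const.sub continuous_fst))).sub continuous_const
    · exact hpr.comp continuous_snd
    · exact hps.comp continuous_fst
  have hΔcv : ∀ v : ℝ, Continuous (Δ v) := by
    intro v
    have : Δ v = fun u => Function.uncurry Δ (v, u) := rfl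
    rw [this]
    exact hΔc.comp (continuous_const.prodMk continuous_id)
  set G : ℝ → ℝ := fun v => ∫ u in (-π)..π, Δ v u with hGdef
  have hGc : Continuous G :=
    intervalIntegral.continuous_parametric_intervalIntegral_of_continuous' hΔc _ _
  -- step: Pop - f p = (1/(4π²)) ∫ G
  have hpos : (0:ℝ) < 4 * π ^ 2 := by positivity
  have hsplit : Pop r s f p - f p = (1 / (4 * π ^ 2)) * ∫ v in (-π)..π, G v := by
    have hinner : ∀ v : ℝ, G v =
        (∫ u in (-π)..π, f (p.1 - u, p.2 - v) * poisson r u * poisson s v)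
          - (f p * poisson s v) * (2 * π) := by
      intro v
      have e1 : (fun u => f p * poisson r u * poisson s v)
          = fun u => (f p * poisson s v) * poisson r u := by funext u; ring
      have i1 : IntervalIntegrable
          (fun u => f (p.1 - u, p.2 - v) * poisson r u * poisson s v) volume (-π) π := by
        apply Continuous.intervalIntegrable
        exact ((hc.comp ((continuous_const.sub continuous_id).prodMk
          continuous_const)).mul hpr).mul continuous_const
      have i2 : IntervalIntegrable
          (fun u => f p * poisson r u * poisson s v) volume (-π) π := by
        apply Continuous.intervalIntegrable
        exact ((continuous_const.mul hpr).mul continuous_const)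
      have : G v = (∫ u in (-π)..π, f (p.1 - u, p.2 - v) * poisson r u * poisson s v)
          - ∫ u in (-π)..π, f p * poisson r u * poisson s v := by
        show (∫ u in (-π)..π, (f (p.1 - u, p.2 - v) - f p) * poisson r u * poisson s v) = _
        rw [← intervalIntegral.integral_sub i1 i2]
        congr 1; funext u; ring
      rw [this, e1, intervalIntegral.integral_const_mul, poisson_integral hr0 hr1]
    have houter : (∫ v in (-π)..π, G v) =
        (∫ v in (-π)..π, ∫ u in (-π)..π,
          f (p.1 - u, p.2 - v) * poisson r u * poisson s v) - f p * (2*π) * (2*π) := by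
      have i3 : IntervalIntegrable (fun v => ∫ u in (-π)..π,
          f (p.1 - u, p.2 - v) * poisson r u * poisson s v) volume (-π) π := by
        apply Continuous.intervalIntegrable
        apply intervalIntegral.continuous_parametric_intervalIntegral_of_continuous'
        exact ((hc.comp ((continuous_const.sub continuous_snd).prodMk
          (continuous_const.sub continuous_fst))).mul (hpr.comp continuous_snd)).mul
          (hps.comp continuous_fst)
      have i4 : IntervalIntegrable (fun v => (f p * poisson s v) * (2*π)) volume (-π) π :=
        ((continuous_const.mul hps).mul continuous_const).intervalIntegrable _ _
      calc (∫ v in (-π)..π, G v)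
          = ∫ v in (-π)..π, ((∫ u in (-π)..π,
              f (p.1 - u, p.2 - v) * poisson r u * poisson s v)
              - (f p * poisson s v) * (2*π)) := by
            congr 1; funext v; exact hinner v
        _ = (∫ v in (-π)..π, ∫ u in (-π)..π,
              f (p.1 - u, p.2 - v) * poisson r u * poisson s v)
            - ∫ v in (-π)..π, (f p * poisson s v) * (2*π) :=
            intervalIntegral.integral_sub i3 i4
        _ = _ := by
            have e2 : (fun v => (f p * poisson s v) * (2*π))
                = fun v => (f p * (2*π)) * poisson s v := by funext v; ring
            rw [e2, intervalIntegral.integral_const_mul, poisson_integral hs0 hs1]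
    rw [houter]
    simp only [Pop]
    field_simp
    ring
  -- bound functions
  set B2 : ℝ → ℝ → ℝ := fun v u =>
    (ε/4 + C * ((1 - cos u) + (1 - cos v))) * (poisson r u * poisson s v) with hB2def
  set Bv : ℝ → ℝ := fun v =>
    ((ε/4 + C * (1 - cos v)) * poisson s v) * (2*π)
      + (C * poisson s v) * (2 * π * (1 - r)) with hBvdef
  have hB2int : ∀ v, ∫ u in (-π)..π, B2 v u = Bv v := by
    intro v
    have e : B2 v = fun u =>
        ((ε/4 + C * (1 - cos v)) * poisson s v) * poisson r u
          + (C * poisson s v) * ((1 - cos u) * poisson r u) := by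
      funext u; simp only [hB2def]; ring
    rw [e, intervalIntegral.integral_add
        ((continuous_const.fun_mul hpr).intervalIntegrable _ _)
        ((continuous_const.fun_mul ((continuous_const.fun_sub Real.continuous_cos).fun_mul
          hpr)).intervalIntegrable _ _),
      intervalIntegral.integral_const_mul, intervalIntegral.integral_const_mul,
      poisson_integral hr0 hr1, poisson_integral2 hr2 hr1]
  have hGbound : ∀ v ∈ Set.Icc (-π) π, |G v| ≤ Bv v := by
    intro v hv
    have h1 : |G v| ≤ ∫ u in (-π)..π, |Δ v u| :=
      intervalIntegral.abs_integral_le_integral_abs (by linarith)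
    have h2 : (∫ u in (-π)..π, |Δ v u|) ≤ ∫ u in (-π)..π, B2 v u := by
      apply intervalIntegral.integral_mono_on (by linarith)
        ((hΔcv v).abs.intervalIntegrable _ _)
      · apply Continuous.intervalIntegrable
        exact (continuous_const.add (continuous_const.mul
          ((continuous_const.sub Real.continuous_cos).add continuous_const))).mul
          (hpr.mul continuous_const)
      · intro u hu
        have habs : |Δ v u| = |f (p.1 - u, p.2 - v) - f p| * (poisson r u * poisson s v) := by
          simp only [hΔdef]
          rw [mul_assoc, abs_mul, abs_of_nonneg
            (mul_nonneg (poisson_nonneg hr0 hr1 u) (poisson_nonneg hs0 hs1 v))]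
        rw [habs]
        simp only [hB2def]
        exact mul_le_mul_of_nonneg_right (key u v hu hv)
          (mul_nonneg (poisson_nonneg hr0 hr1 u) (poisson_nonneg hs0 hs1 v))
    calc |G v| ≤ ∫ u in (-π)..π, |Δ v u| := h1
      _ ≤ ∫ u in (-π)..π, B2 v u := h2
      _ = Bv v := hB2int v
  have hBvint : ∫ v in (-π)..π, Bv v
      = (4 * π^2) * (ε/4 + C * ((1 - r) + (1 - s))) := by
    have e : Bv = fun v =>
        ((ε/4 * (2*π) + C * (2 * π * (1 - r)) + C * (2*π))) * poisson s v
          + (C * (2*π)) * ((1 - cos v) * poisson s v)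
          + (- (C * (2*π))) * poisson s v := by
      funext v; simp only [hBvdef]; ring
    rw [e]
    rw [intervalIntegral.integral_add (by
        apply Continuous.intervalIntegrable
        exact (continuous_const.fun_mul hps).fun_add (continuous_const.fun_mul
          ((continuous_const.fun_sub Real.continuous_cos).fun_mul hps)))
      ((continuous_const.fun_mul hps).intervalIntegrable _ _)]
    rw [intervalIntegral.integral_add ((continuous_const.fun_mul hps).intervalIntegrable _ _)
      ((continuous_const.fun_mul ((continuous_const.fun_sub Real.continuous_cos).fun_mul
        hps)).intervalIntegrable _ _)]
    rw [intervalIntegral.integral_const_mul, intervalIntegral.integral_const_mul,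
      intervalIntegral.integral_const_mul, poisson_integral hs0 hs1,
      poisson_integral2 hs2 hs1]
    ring
  -- put it together
  have hfinal : |Pop r s f p - f p| ≤ ε/4 + C * ((1 - r) + (1 - s)) := by
    rw [hsplit, abs_mul, abs_of_pos (by positivity : (0:ℝ) < 1 / (4 * π^2))]
    calc (1 / (4 * π^2)) * |∫ v in (-π)..π, G v|
        ≤ (1 / (4 * π^2)) * ∫ v in (-π)..π, |G v| := by
          apply mul_le_mul_of_nonneg_left
            (intervalIntegral.abs_integral_le_integral_abs (by linarith))
          positivity
      _ ≤ (1 / (4 * π^2)) * ∫ v in (-π)..π, Bv v := by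
          apply mul_le_mul_of_nonneg_left _ (by positivity)
          apply intervalIntegral.integral_mono_on (by linarith)
            (hGc.abs.intervalIntegrable _ _)
            (by
              apply Continuous.intervalIntegrable
              simp only [hBvdef]
              exact (((continuous_const.add (continuous_const.mul
                (continuous_const.sub Real.continuous_cos))).mul hps).mul
                continuous_const).add ((continuous_const.mul hps).mul continuous_const))
            hGbound
      _ = ε/4 + C * ((1 - r) + (1 - s)) := by
          rw [hBvint]; field_simp
  have hrs : (1 - r) + (1 - s) < 2 * (ε*d/(8*(2*M+1))) := by linarith
  have hC2 : C * (2 * (ε*d/(8*(2*M+1)))) = ε/4 := by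
    simp only [hCdef]; field_simp; ring
  have : C * ((1 - r) + (1 - s)) < ε/4 := by
    calc C * ((1 - r) + (1 - s)) < C * (2 * (ε*d/(8*(2*M+1)))) :=
        mul_lt_mul_of_pos_left hrs hC
      _ = ε/4 := hC2
  linarith
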